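/- Let u be inner with u(0) ≠ 0. Define V_u : K_u^⊥ → L^2 by V_u = P^− + (conj(u)/conj(u(0)))·P^+, with inverse V_u^{-1} = P^− + u·conj(u(0))·P^+. Then V_u D_u V_u^{-1} = M_z, the bilateral shift on L^2. In particular, for any inner u, v with u(0) ≠ 0 and v(0) ≠ 0, D_u is similar to D_v. -/

import Mathlib

open MeasureTheory Complex AddCircle

noncomputable section

namespace Paper

/-- The period `2π`. -/
abbrev T : ℝ := 2 * Real.pi

instance : Fact (0 < T) := ⟨by positivity⟩

/-- Normalized Lebesgue (Haar) measure on the circle. -/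
abbrev μ : Measure (AddCircle T) := haarAddCircle

/-- The space `L²(𝕋, dm)`. -/
abbrev L2 : Type := Lp ℂ 2 μ

lemma memLp_mul {u : AddCircle T → ℂ} (hm : AEStronglyMeasurable u μ)
    (hb : ∀ᵐ x ∂μ, ‖u x‖ ≤ 1) (f : L2) :
    MemLp (fun x => u x * (f : AddCircle T → ℂ) x) 2 μ := by
  refine (Lp.memLp f).of_le (hm.mul (Lp.aestronglyMeasurable f)) ?_
  filter_upwards [hb] with x hx
  calc ‖u x * (f : AddCircle T → ℂ) x‖ = ‖u x‖ * ‖(f : AddCircle T → ℂ) x‖ := norm_mul _ _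
    _ ≤ 1 * ‖(f : AddCircle T → ℂ) x‖ := by gcongr
    _ = ‖(f : AddCircle T → ℂ) x‖ := one_mul _

/-- Multiplication by a measurable function bounded by `1`, as a bounded operator on `L²`. -/
def mulCLM (u : AddCircle T → ℂ) (hm : AEStronglyMeasurable u μ)
    (hb : ∀ᵐ x ∂μ, ‖u x‖ ≤ 1) : L2 →L[ℂ] L2 :=
  LinearMap.mkContinuous
    { toFun := fun f => (memLp_mul hm hb f).toLp _
      map_add' := fun f g => by
        show MemLp.toLp _ (memLp_mul hm hb (f + g)) = _
        have h : (fun x => u x * ((f + g : L2) : AddCircle T → ℂ) x)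
            =ᵐ[μ] (fun x => u x * (f : AddCircle T → ℂ) x)
              + (fun x => u x * (g : AddCircle T → ℂ) x) := by
          filter_upwards [Lp.coeFn_add f g] with x hx
          simp only [Pi.add_apply, hx, mul_add]
        rw [MemLp.toLp_congr (memLp_mul hm hb (f + g))
          ((memLp_mul hm hb f).add (memLp_mul hm hb g)) h, MemLp.toLp_add]
      map_smul' := fun c f => by
        have h : (fun x => u x * ((c • f : L2) : AddCircle T → ℂ) x)
            =ᵐ[μ] c • (fun x => u x * (f : AddCircle T → ℂ) x) := by
          filter_upwards [Lp.coeFn_smul c f] with x hx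
          simp only [Pi.smul_apply, hx, smul_eq_mul]
          ring
        simp only [RingHom.id_apply]
        rw [MemLp.toLp_congr (memLp_mul hm hb (c • f))
          ((memLp_mul hm hb f).const_smul c) h, MemLp.toLp_const_smul] }
    1
    (fun f => by
      simp only [LinearMap.coe_mk, AddHom.coe_mk, one_mul]
      rw [Lp.norm_toLp]
      have h1 : eLpNorm (fun x => u x * (f : AddCircle T → ℂ) x) 2 μ
          ≤ eLpNorm (f : AddCircle T → ℂ) 2 μ := by
        refine eLpNorm_mono_ae ?_
        filter_upwards [hb] with x hx
        calc ‖u x * (f : AddCircle T → ℂ) x‖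
            = ‖u x‖ * ‖(f : AddCircle T → ℂ) x‖ := norm_mul _ _
          _ ≤ 1 * ‖(f : AddCircle T → ℂ) x‖ := by gcongr
          _ = ‖(f : AddCircle T → ℂ) x‖ := one_mul _
      calc (eLpNorm (fun x => u x * (f : AddCircle T → ℂ) x) 2 μ).toReal
          ≤ (eLpNorm (f : AddCircle T → ℂ) 2 μ).toReal :=
            ENNReal.toReal_mono (Lp.eLpNorm_ne_top f) h1
        _ = ‖f‖ := (Lp.norm_def f).symm)

lemma memLp_conj (f : L2) :
    MemLp (fun x => (starRingEnd ℂ) ((f : AddCircle T → ℂ) x)) 2 μ := by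
  refine (Lp.memLp f).of_le ?_ ?_
  · exact Complex.continuous_conj.comp_aestronglyMeasurable (Lp.aestronglyMeasurable f)
  · filter_upwards with x
    simp

/-- Complex conjugation on `L²`. -/
def conjL2 (f : L2) : L2 := (memLp_conj f).toLp _

/-- The independent variable `z = e^{iθ}` as a function on the circle. -/
def zfun : AddCircle T → ℂ := fun x => fourier 1 x

lemma zfun_meas : AEStronglyMeasurable zfun μ :=
  ((map_continuous (fourier (T := T) 1)).aestronglyMeasurable)

lemma zfun_norm : ∀ᵐ x ∂μ, ‖zfun x‖ ≤ 1 := by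
  filter_upwards with x
  simp [zfun, Circle.norm_coe]

/-- Multiplication by `z` (the bilateral shift `M` on `L²`). -/
def Mz : L2 →L[ℂ] L2 := mulCLM zfun zfun_meas zfun_norm

/-- Multiplication by `conj z`. -/
def Mzbar : L2 →L[ℂ] L2 :=
  mulCLM (fun x => (starRingEnd ℂ) (zfun x))
    (Complex.continuous_conj.comp_aestronglyMeasurable zfun_meas)
    (by filter_upwards with x; simp [zfun, Circle.norm_coe])

/-- The Hardy space `H² = {f ∈ L² : f̂(n) = 0 for all n < 0}`. -/
def H2 : Submodule ℂ L2 where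
  carrier := {f | ∀ n : ℤ, n < 0 → fourierBasis.repr f n = 0}
  add_mem' := by
    intro f g hf hg n hn
    simp [map_add, hf n hn, hg n hn]
  zero_mem' := by intro n hn; simp
  smul_mem' := by
    intro c f hf n hn
    simp [_root_.map_smul, hf n hn]

lemma continuous_coeff (n : ℤ) :
    Continuous fun f : L2 => fourierBasis.repr f n := by
  rw [Metric.continuous_iff]
  intro f ε hε
  refine ⟨ε, hε, fun g hg => ?_⟩
  have h1 : fourierBasis.repr g n - fourierBasis.repr f n = fourierBasis.repr (g - f) n := by
    simp [map_sub]
  have h2 : ‖fourierBasis.repr (g - f) n‖ ≤ ‖fourierBasis.repr (g - f)‖ :=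
    lp.norm_apply_le_norm (by norm_num) _ n
  have h3 : ‖fourierBasis.repr (g - f)‖ = ‖g - f‖ :=
    fourierBasis.repr.norm_map _
  calc dist (fourierBasis.repr g n) (fourierBasis.repr f n)
      = ‖fourierBasis.repr (g - f) n‖ := by rw [dist_eq_norm, h1]
    _ ≤ ‖g - f‖ := by rw [← h3]; exact h2
    _ = dist g f := (dist_eq_norm g f).symm
    _ < ε := hg

lemma H2_isClosed : IsClosed (H2 : Set L2) := by
  have : (H2 : Set L2) =
      ⋂ n ∈ {m : ℤ | m < 0}, {f : L2 | fourierBasis.repr f n = 0} := by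
    ext f
    simp only [Set.mem_iInter, Set.mem_setOf_eq]
    rfl
  rw [this]
  exact isClosed_biInter fun n _ => isClosed_eq (continuous_coeff n) continuous_const

instance : CompleteSpace H2 := H2_isClosed.completeSpace_coe

/-- The Riesz projection `P⁺` of `L²` onto `H²`. -/
def Pp : L2 →L[ℂ] L2 := H2.subtypeL ∘L H2.orthogonalProjectionOnto

/-- The projection `P⁻ = I − P⁺` of `L²` onto `conj(H²₀)`. -/
def Pm : L2 →L[ℂ] L2 := ContinuousLinearMap.id ℂ L2 - Pp

/-- `conj(H²₀) = {f ∈ L² : f̂(n) = 0 for all n ≥ 0}`, the orthogonal complement of `H²`. -/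
def Hm : Submodule ℂ L2 where
  carrier := {f | ∀ n : ℤ, 0 ≤ n → fourierBasis.repr f n = 0}
  add_mem' := by
    intro f g hf hg n hn
    simp [map_add, hf n hn, hg n hn]
  zero_mem' := by intro n hn; simp
  smul_mem' := by
    intro c f hf n hn
    simp [_root_.map_smul, hf n hn]

/-- The constant function `1` as an element of `L²`. -/
def oneL2 : L2 := (memLp_const (1 : ℂ)).toLp _

/-- An inner function: a bounded measurable unimodular function on the circle whose
negative Fourier coefficients vanish. -/
structure InnerData where
  u : AddCircle T → ℂ
  meas : AEStronglyMeasurable u μ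
  unim : ∀ᵐ x ∂μ, ‖u x‖ = 1
  anal : ∀ n : ℤ, n < 0 → fourierCoeff u n = 0

namespace InnerData

variable (U : InnerData)

lemma bd : ∀ᵐ x ∂μ, ‖U.u x‖ ≤ 1 := by
  filter_upwards [U.unim] with x hx
  rw [hx]

/-- Multiplication by `u`: the operator `M_u` on `L²`. -/
def M : L2 →L[ℂ] L2 := mulCLM U.u U.meas U.bd

/-- Multiplication by `conj u`: the operator `M_{conj u}` on `L²`. -/
def Mc : L2 →L[ℂ] L2 :=
  mulCLM (fun x => (starRingEnd ℂ) (U.u x))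
    (Complex.continuous_conj.comp_aestronglyMeasurable U.meas)
    (by filter_upwards [U.bd] with x hx; simpa using hx)

/-- `u` as an element of `L²`. -/
def toL2 : L2 :=
  (memLp_top_of_bound U.meas 1 U.bd |>.mono_exponent le_top).toLp _

/-- The value `u(0)` of (the analytic extension of) `u` at the origin, i.e. the mean of `u`. -/
def a0 : ℂ := fourierCoeff U.u 0

/-- The subspace `uH²`. -/
def uH2 : Submodule ℂ L2 := Submodule.map (U.M : L2 →ₗ[ℂ] L2) H2

/-- The model space `K_u = H² ∩ (uH²)ᗮ`. -/
def Ku : Submodule ℂ L2 := H2 ⊓ (U.uH2)ᗮ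

lemma Ku_isClosed : IsClosed (U.Ku : Set L2) := by
  have : (U.Ku : Set L2) = (H2 : Set L2) ∩ ((U.uH2)ᗮ : Set L2) := rfl
  rw [this]
  exact H2_isClosed.inter (U.uH2).isClosed_orthogonal

instance : CompleteSpace U.Ku := U.Ku_isClosed.completeSpace_coe

/-- `K_u^⊥`, the orthogonal complement of the model space in `L²`. -/
def KP : Submodule ℂ L2 := (U.Ku)ᗮ

instance : CompleteSpace U.KP := (U.Ku).isClosed_orthogonal.completeSpace_coe

/-- The orthogonal projection `P_u : L² → K_u` (viewed as an operator on `L²`). -/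
def Pu : L2 →L[ℂ] L2 := (U.Ku).subtypeL ∘L (U.Ku).orthogonalProjectionOnto

/-- The dual of the compressed shift: `D_u = (I − P_u) M_z |_{K_u^⊥}`. -/
def Du : U.KP →L[ℂ] U.KP :=
  (U.KP).orthogonalProjectionOnto ∘L Mz ∘L (U.KP).subtypeL

/-- The conjugation `C_u f = u · conj(z f)` on `L²`. -/
def C (f : L2) : L2 := U.M (conjL2 (Mz f))

/-- The reproducing kernel of `K_u` at `0`: `k₀ᵘ = 1 − conj(u(0))·u`. -/
def k0 : L2 := oneL2 - (starRingEnd ℂ) U.a0 • U.toL2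

/-- The similarity `V_u = P⁻ + (conj u/conj u(0)) P⁺` of the paper. -/
def V : L2 →L[ℂ] L2 := Pm + ((starRingEnd ℂ) U.a0)⁻¹ • (U.Mc ∘L Pp)

/-- The inverse similarity `V_u⁻¹ = P⁻ + conj(u(0)) u P⁺`. -/
def Vinv : L2 →L[ℂ] L2 := Pm + (starRingEnd ℂ) U.a0 • (U.M ∘L Pp)

end InnerData

lemma Mz_mem_H2 {f : L2} (hf : f ∈ H2) : Mz f ∈ H2 := by
  intro n hn
  rw [fourierBasis_repr]
  have hcoe : (Mz f : AddCircle T → ℂ) =ᵐ[μ] fun x => zfun x * (f : AddCircle T → ℂ) x :=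
    MemLp.coeFn_toLp (memLp_mul zfun_meas zfun_norm f)
  have h1 : fourierCoeff (Mz f : AddCircle T → ℂ) n
      = fourierCoeff (f : AddCircle T → ℂ) (n - 1) := by
    unfold fourierCoeff
    rw [integral_congr_ae (by filter_upwards [hcoe] with x hx; rw [hx])]
    refine integral_congr_ae ?_
    filter_upwards with x
    have : fourier (-n) x * zfun x = fourier (-(n - 1)) x := by
      unfold zfun
      rw [show (-(n - 1) : ℤ) = -n + 1 by ring, fourier_add]
    simp only [smul_eq_mul]
    calc fourier (-n) x * (zfun x * (f : AddCircle T → ℂ) x)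
        = (fourier (-n) x * zfun x) * (f : AddCircle T → ℂ) x := by ring
      _ = fourier (-(n - 1)) x * (f : AddCircle T → ℂ) x := by rw [this]
  rw [h1]
  have := hf (n - 1) (by omega)
  rwa [fourierBasis_repr] at this

/-- The unilateral shift `S` on `H²`. -/
def Shift : H2 →L[ℂ] H2 :=
  (Mz ∘L H2.subtypeL).codRestrict H2 (fun x => Mz_mem_H2 x.2)

/-!
Split `L² = conj(H²₀) ⊕ H²`; then `K_u^⊥ = conj(H²₀) ⊕ uH²`. The operator `V_u` is the identity
on `conj(H²₀)` and sends `u h` to `h / conj(u(0))`, so it maps `K_u^⊥` bijectively onto `L²`,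
with inverse `V_u⁻¹`. For `f = m + u h ∈ K_u^⊥` with `m ∈ conj(H²₀)`, `h ∈ H²`, the function
`z f` leaves `K_u^⊥` only through the constant `a = m̂(-1)`; since `k₀ = 1 - conj(u(0)) u` lies
in `K_u`, this gives `D_u f = z f - a k₀ = (z m - a) + u (z h + a conj(u(0)))`, and applying
`V_u` yields `z m + z h / conj(u(0)) = z V_u f`. Composing `V_v⁻¹ V_u` gives the similarity.
-/

end Paper

open scoped InnerProductSpace ComplexConjugate

theorem HilbertBasis.inner_eq_zero_of_repr_eq_zero_or {ι 𝕜 E : Type*} [RCLike 𝕜]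
    [NormedAddCommGroup E] [InnerProductSpace 𝕜 E] (b : HilbertBasis ι 𝕜 E) {x y : E}
    (h : ∀ i, b.repr x i = 0 ∨ b.repr y i = 0) : ⟪x, y⟫_𝕜 = 0 := by
  rw [← b.tsum_inner_mul_inner]
  convert tsum_zero with i
  rcases h i with h | h
  · rw [← inner_conj_symm, ← b.repr_apply_apply, h, map_zero, zero_mul]
  · rw [← b.repr_apply_apply, h, mul_zero]

section FourierCoeff

variable {T : ℝ} [Fact (0 < T)]

theorem fourierCoeff_fourier_mul (g : AddCircle T → ℂ) (m n : ℤ) :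
    fourierCoeff (fun x => fourier m x * g x) n = fourierCoeff g (n - m) := by
  refine integral_congr_ae (Filter.Eventually.of_forall fun x => ?_)
  simp only [smul_eq_mul]
  rw [← mul_assoc, ← fourier_add, show -n + m = -(n - m) by ring]

theorem fourierCoeff_conj (g : AddCircle T → ℂ) (n : ℤ) :
    fourierCoeff (fun x => conj (g x)) n = conj (fourierCoeff g (-n)) := by
  rw [fourierCoeff, fourierCoeff, ← integral_conj]
  refine integral_congr_ae (Filter.Eventually.of_forall fun x => ?_)
  simp only [smul_eq_mul, map_mul, neg_neg, ← fourier_neg]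

theorem fourierBasis_repr_toLp {f : AddCircle T → ℂ} (hf : MemLp f 2 haarAddCircle) (n : ℤ) :
    fourierBasis.repr (hf.toLp f) n = fourierCoeff f n := by
  rw [fourierBasis_repr]
  exact congrFun (fourierCoeff_congr_ae hf.coeFn_toLp) n

end FourierCoeff

namespace Paper

section Multiplication

variable {u v : AddCircle T → ℂ} {hu : AEStronglyMeasurable u μ} {hu1 : ∀ᵐ x ∂μ, ‖u x‖ ≤ 1}
  {hv : AEStronglyMeasurable v μ} {hv1 : ∀ᵐ x ∂μ, ‖v x‖ ≤ 1}

lemma coeFn_mulCLM (f : L2) :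
    (mulCLM u hu hu1 f : AddCircle T → ℂ) =ᵐ[μ] fun x => u x * (f : AddCircle T → ℂ) x :=
  (memLp_mul hu hu1 f).coeFn_toLp

lemma fourierBasis_repr_mulCLM (f : L2) (n : ℤ) :
    fourierBasis.repr (mulCLM u hu hu1 f) n
      = fourierCoeff (fun x => u x * (f : AddCircle T → ℂ) x) n :=
  fourierBasis_repr_toLp (memLp_mul hu hu1 f) n

lemma mulCLM_comm (f : L2) :
    mulCLM u hu hu1 (mulCLM v hv hv1 f) = mulCLM v hv hv1 (mulCLM u hu hu1 f) := by
  refine Lp.ext ?_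
  filter_upwards [coeFn_mulCLM (hu1 := hu1) (mulCLM v hv hv1 f), coeFn_mulCLM (hu1 := hv1) f,
    coeFn_mulCLM (hu1 := hv1) (mulCLM u hu hu1 f), coeFn_mulCLM (hu1 := hu1) f]
    with x h1 h2 h3 h4
  rw [h1, h2, h3, h4, mul_left_comm]

lemma mulCLM_mulCLM_of_mul_eq_one (h : ∀ᵐ x ∂μ, v x * u x = 1) (f : L2) :
    mulCLM v hv hv1 (mulCLM u hu hu1 f) = f := by
  refine Lp.ext ?_
  filter_upwards [coeFn_mulCLM (hu1 := hv1) (mulCLM u hu hu1 f), coeFn_mulCLM (hu1 := hu1) f, h]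
    with x h1 h2 h3
  rw [h1, h2, ← mul_assoc, h3, one_mul]

lemma norm_mulCLM_of_norm_eq_one (h : ∀ᵐ x ∂μ, ‖u x‖ = 1) (f : L2) :
    ‖mulCLM u hu hu1 f‖ = ‖f‖ := by
  rw [Lp.norm_def, Lp.norm_def, eLpNorm_congr_ae (coeFn_mulCLM f)]
  congr 1
  refine eLpNorm_congr_norm_ae ?_
  filter_upwards [h] with x hx
  rw [norm_mul, hx, one_mul]

lemma inner_mulCLM_left {hu' : AEStronglyMeasurable (fun x => conj (u x)) μ}
    {hu1' : ∀ᵐ x ∂μ, ‖conj (u x)‖ ≤ 1} (f g : L2) :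
    ⟪mulCLM u hu hu1 f, g⟫_ℂ = ⟪f, mulCLM (fun x => conj (u x)) hu' hu1' g⟫_ℂ := by
  rw [L2.inner_def, L2.inner_def]
  refine integral_congr_ae ?_
  filter_upwards [coeFn_mulCLM (hu1 := hu1) f, coeFn_mulCLM (hu1 := hu1') g] with x h1 h2
  rw [h1, h2, RCLike.inner_apply, RCLike.inner_apply, map_mul]
  ring

end Multiplication

lemma fourierBasis_repr_Mz (f : L2) (n : ℤ) :
    fourierBasis.repr (Mz f) n = fourierBasis.repr f (n - 1) := by
  rw [Mz, fourierBasis_repr_mulCLM, fourierBasis_repr]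
  exact fourierCoeff_fourier_mul _ 1 n

lemma fourierBasis_mem_H2 {n : ℤ} (hn : 0 ≤ n) : (fourierBasis n : L2) ∈ H2 := by
  intro m hm
  rw [fourierBasis.repr_self, lp.single_apply, Pi.single_apply, if_neg (by omega)]

lemma oneL2_eq_fourierBasis : oneL2 = fourierBasis 0 := by
  refine Lp.ext ?_
  rw [coe_fourierBasis]
  filter_upwards [(memLp_const (1 : ℂ)).coeFn_toLp, coeFn_fourierLp 2 0] with x h1 h2
  rw [oneL2, h1, h2, fourier_zero]

lemma oneL2_mem_H2 : oneL2 ∈ H2 :=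
  oneL2_eq_fourierBasis ▸ fourierBasis_mem_H2 le_rfl

lemma Hm_eq_orthogonal : Hm = H2ᗮ := by
  ext f
  constructor
  · intro hf g hg
    refine fourierBasis.inner_eq_zero_of_repr_eq_zero_or fun n => ?_
    rcases lt_or_ge n 0 with hn | hn
    · exact Or.inl (hg n hn)
    · exact Or.inr (hf n hn)
  · intro hf n hn
    rw [fourierBasis.repr_apply_apply]
    exact Submodule.inner_right_of_mem_orthogonal (fourierBasis_mem_H2 hn) hf

lemma Pp_mem_H2 (f : L2) : Pp f ∈ H2 :=
  H2.starProjection_apply_mem f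

lemma Pm_mem_Hm (f : L2) : Pm f ∈ Hm :=
  Hm_eq_orthogonal ▸ H2.sub_starProjection_mem_orthogonal f

lemma Pm_add_Pp (f : L2) : Pm f + Pp f = f :=
  sub_add_cancel f (Pp f)

lemma Pp_add_of_mem {m b : L2} (hm : m ∈ Hm) (hb : b ∈ H2) : Pp (m + b) = b :=
  H2.eq_starProjection_of_mem_orthogonal' hb (Hm_eq_orthogonal ▸ hm) (add_comm m b)

lemma Pm_add_of_mem {m b : L2} (hm : m ∈ Hm) (hb : b ∈ H2) : Pm (m + b) = m := by
  show m + b - Pp (m + b) = m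
  rw [Pp_add_of_mem hm hb, add_sub_cancel_right]

lemma Mz_sub_smul_oneL2_mem_Hm {m : L2} (hm : m ∈ Hm) :
    Mz m - fourierBasis.repr m (-1) • oneL2 ∈ Hm := by
  intro n hn
  rw [map_sub, _root_.map_smul, oneL2_eq_fourierBasis, fourierBasis.repr_self]
  simp only [lp.coeFn_sub, lp.coeFn_smul, Pi.sub_apply, Pi.smul_apply, fourierBasis_repr_Mz]
  rcases eq_or_lt_of_le hn with rfl | hn
  · simp
  · simp [hm (n - 1) (by omega), lp.single_apply, hn.ne']

namespace InnerData

variable (U : InnerData)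

lemma Mc_M (f : L2) : U.Mc (U.M f) = f := by
  refine mulCLM_mulCLM_of_mul_eq_one ?_ f
  filter_upwards [U.unim] with x hx
  rw [← Complex.normSq_eq_conj_mul_self, Complex.normSq_eq_norm_sq, hx]
  norm_num

lemma inner_M_left (f g : L2) : ⟪U.M f, g⟫_ℂ = ⟪f, U.Mc g⟫_ℂ :=
  inner_mulCLM_left f g

lemma fourierBasis_repr_Mc_fourierBasis (n m : ℤ) :
    fourierBasis.repr (U.Mc (fourierBasis n)) m = conj (fourierCoeff U.u (n - m)) := by
  refine (fourierBasis_repr_mulCLM (fourierBasis n) m).trans ?_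
  rw [coe_fourierBasis, fourierCoeff_congr_ae (g := fun x => fourier n x * conj (U.u x)),
    fourierCoeff_fourier_mul, fourierCoeff_conj, neg_sub]
  filter_upwards [coeFn_fourierLp 2 n] with x hx
  rw [hx, mul_comm]

lemma M_mem_H2 {h : L2} (hh : h ∈ H2) : U.M h ∈ H2 := by
  intro n hn
  have hMc : U.Mc (fourierBasis n) ∈ Hm := fun m hm => by
    rw [U.fourierBasis_repr_Mc_fourierBasis, U.anal (n - m) (by omega), map_zero]
  rw [fourierBasis.repr_apply_apply, ← inner_conj_symm, U.inner_M_left,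
    Submodule.inner_right_of_mem_orthogonal hh (Hm_eq_orthogonal ▸ hMc), map_zero]

lemma uH2_le_H2 : U.uH2 ≤ H2 := by
  rintro _ ⟨h, hh, rfl⟩
  exact U.M_mem_H2 hh

instance : CompleteSpace U.uH2 := by
  have hM : Isometry U.M :=
    AddMonoidHomClass.isometry_of_norm U.M (norm_mulCLM_of_norm_eq_one U.unim)
  refine IsComplete.completeSpace_coe ?_
  have hset : (U.uH2 : Set L2) = U.M '' H2 := by
    ext v
    simp [uH2]
  rw [hset]
  exact (isComplete_image_iff hM.isUniformInducing).2 H2_isClosed.isComplete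

lemma Hm_le_KP : Hm ≤ U.KP :=
  Hm_eq_orthogonal ▸ Submodule.orthogonal_le inf_le_left

lemma uH2_le_KP : U.uH2 ≤ U.KP :=
  U.uH2.le_orthogonal_orthogonal.trans (Submodule.orthogonal_le inf_le_right)

lemma mem_KP_iff {f : L2} : f ∈ U.KP ↔ ∃ m ∈ Hm, ∃ h ∈ H2, f = m + U.M h := by
  constructor
  · intro hf
    have hPp : Pp f ∈ U.KP := by
      rw [← sub_eq_of_eq_add' (Pm_add_Pp f).symm]
      exact U.KP.sub_mem hf (U.Hm_le_KP (Pm_mem_Hm f))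
    -- the part of `Pp f` orthogonal to `uH²` lies in `K_u` and in `K_u^⊥`
    have hq : Pp f - U.uH2.starProjection (Pp f) = 0 := by
      refine (Submodule.mem_bot ℂ).1 (U.Ku.inf_orthogonal_eq_bot ▸ ⟨⟨?_, ?_⟩, ?_⟩)
      · exact H2.sub_mem (H2.starProjection_apply_mem f)
          (U.uH2_le_H2 (U.uH2.starProjection_apply_mem _))
      · exact U.uH2.sub_starProjection_mem_orthogonal _
      · exact U.KP.sub_mem hPp (U.uH2_le_KP (U.uH2.starProjection_apply_mem _))
    have hmem : Pp f ∈ U.uH2 := by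
      rw [sub_eq_zero.1 hq]
      exact U.uH2.starProjection_apply_mem _
    obtain ⟨h, hh, hMh⟩ := hmem
    have hMh : U.M h = Pp f := hMh
    exact ⟨Pm f, Pm_mem_Hm f, h, hh, by rw [hMh, Pm_add_Pp]⟩
  · rintro ⟨m, hm, h, hh, rfl⟩
    exact U.KP.add_mem (U.Hm_le_KP hm) (U.uH2_le_KP ⟨h, hh, rfl⟩)

lemma k0_eq : U.k0 = oneL2 - conj U.a0 • U.M oneL2 := by
  have htoL2 : U.toL2 = U.M oneL2 := by
    have hu : (U.toL2 : AddCircle T → ℂ) =ᵐ[μ] U.u := MemLp.coeFn_toLp _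
    refine Lp.ext ?_
    filter_upwards [hu, coeFn_mulCLM (hu1 := U.bd) oneL2,
      (memLp_const (1 : ℂ)).coeFn_toLp] with x h1 h2 h3
    rw [h1, M, h2, oneL2, h3, mul_one]
  rw [k0, htoL2]

lemma k0_mem_Ku : U.k0 ∈ U.Ku := by
  have hMc : U.Mc U.k0 ∈ Hm := by
    intro n hn
    rw [k0_eq, map_sub, _root_.map_smul, Mc_M, map_sub, _root_.map_smul, oneL2_eq_fourierBasis]
    simp only [lp.coeFn_sub, lp.coeFn_smul, Pi.sub_apply, Pi.smul_apply,
      fourierBasis_repr_Mc_fourierBasis, fourierBasis.repr_self]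
    rcases eq_or_lt_of_le hn with rfl | hn
    · simp [a0]
    · simp [U.anal (-n) (by omega), lp.single_apply, hn.ne']
  refine ⟨by rw [k0_eq]; exact H2.sub_mem oneL2_mem_H2 (H2.smul_mem _ (U.M_mem_H2 oneL2_mem_H2)),
    (Submodule.mem_orthogonal _ _).2 ?_⟩
  rintro _ ⟨h, hh, rfl⟩
  show ⟪U.M h, U.k0⟫_ℂ = 0
  rw [inner_M_left]
  exact Submodule.inner_right_of_mem_orthogonal hh (Hm_eq_orthogonal ▸ hMc)

lemma V_add_M_of_mem {m h : L2} (hm : m ∈ Hm) (hh : h ∈ H2) :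
    U.V (m + U.M h) = m + (conj U.a0)⁻¹ • h := by
  have hV : U.V (m + U.M h) = Pm (m + U.M h) + (conj U.a0)⁻¹ • U.Mc (Pp (m + U.M h)) := rfl
  rw [hV, Pm_add_of_mem hm (U.M_mem_H2 hh), Pp_add_of_mem hm (U.M_mem_H2 hh), Mc_M]

lemma Vinv_add_of_mem {m h : L2} (hm : m ∈ Hm) (hh : h ∈ H2) :
    U.Vinv (m + h) = m + U.M (conj U.a0 • h) := by
  have hV : U.Vinv (m + h) = Pm (m + h) + conj U.a0 • U.M (Pp (m + h)) := rfl
  rw [hV, Pm_add_of_mem hm hh, Pp_add_of_mem hm hh, _root_.map_smul]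

lemma Vinv_V (h0 : U.a0 ≠ 0) {f : L2} (hf : f ∈ U.KP) : U.Vinv (U.V f) = f := by
  obtain ⟨m, hm, h, hh, rfl⟩ := U.mem_KP_iff.1 hf
  rw [U.V_add_M_of_mem hm hh, U.Vinv_add_of_mem hm (H2.smul_mem _ hh), smul_smul,
    mul_inv_cancel₀ ((map_ne_zero _).2 h0), one_smul]

lemma V_Vinv (h0 : U.a0 ≠ 0) (g : L2) : U.V (U.Vinv g) = g := by
  conv_lhs => rw [← Pm_add_Pp g]
  rw [U.Vinv_add_of_mem (Pm_mem_Hm g) (Pp_mem_H2 g),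
    U.V_add_M_of_mem (Pm_mem_Hm g) (H2.smul_mem _ (Pp_mem_H2 g)),
    smul_smul, inv_mul_cancel₀ ((map_ne_zero _).2 h0), one_smul, Pm_add_Pp]

lemma Vinv_mem_KP (g : L2) : U.Vinv g ∈ U.KP := by
  rw [← Pm_add_Pp g, U.Vinv_add_of_mem (Pm_mem_Hm g) (Pp_mem_H2 g)]
  exact U.mem_KP_iff.2 ⟨_, Pm_mem_Hm g, _, H2.smul_mem _ (Pp_mem_H2 g), rfl⟩

lemma starProjection_KP_Mz {m h : L2} (hm : m ∈ Hm) (hh : h ∈ H2) :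
    U.KP.starProjection (Mz (m + U.M h)) =
      (Mz m - fourierBasis.repr m (-1) • oneL2)
        + U.M (Mz h + (fourierBasis.repr m (-1) * conj U.a0) • oneL2) := by
  set a := fourierBasis.repr m (-1)
  refine U.KP.eq_starProjection_of_mem_orthogonal' (z := a • U.k0)
    (U.mem_KP_iff.2 ⟨_, Mz_sub_smul_oneL2_mem_Hm hm, _,
      H2.add_mem (Mz_mem_H2 hh) (H2.smul_mem _ oneL2_mem_H2), rfl⟩)
    (U.Ku.le_orthogonal_orthogonal (U.Ku.smul_mem a U.k0_mem_Ku)) ?_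
  rw [k0_eq, map_add, map_add, _root_.map_smul, show Mz (U.M h) = U.M (Mz h) from mulCLM_comm h]
  module

lemma V_starProjection_KP_Mz (h0 : U.a0 ≠ 0) {f : L2} (hf : f ∈ U.KP) :
    U.V (U.KP.starProjection (Mz f)) = Mz (U.V f) := by
  obtain ⟨m, hm, h, hh, rfl⟩ := U.mem_KP_iff.1 hf
  rw [U.starProjection_KP_Mz hm hh, U.V_add_M_of_mem (Mz_sub_smul_oneL2_mem_Hm hm)
    (H2.add_mem (Mz_mem_H2 hh) (H2.smul_mem _ oneL2_mem_H2)), U.V_add_M_of_mem hm hh, map_add,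
    _root_.map_smul, smul_add, smul_smul, mul_comm (fourierBasis.repr m (-1)),
    inv_mul_cancel_left₀ ((map_ne_zero _).2 h0)]
  abel

def VEquiv (h0 : U.a0 ≠ 0) : U.KP ≃L[ℂ] L2 :=
  ContinuousLinearEquiv.equivOfInverse (U.V ∘L U.KP.subtypeL)
    (U.Vinv.codRestrict U.KP U.Vinv_mem_KP) (fun f => Subtype.ext (U.Vinv_V h0 f.2))
    (U.V_Vinv h0)

lemma VEquiv_Du (h0 : U.a0 ≠ 0) (f : U.KP) : U.VEquiv h0 (U.Du f) = Mz (U.VEquiv h0 f) :=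
  U.V_starProjection_KP_Mz h0 f.2

lemma Du_VEquiv_symm (h0 : U.a0 ≠ 0) (g : L2) :
    U.Du ((U.VEquiv h0).symm g) = (U.VEquiv h0).symm (Mz g) := by
  rw [ContinuousLinearEquiv.eq_symm_apply, VEquiv_Du, ContinuousLinearEquiv.apply_symm_apply]

end InnerData

/-- If `u(0) ≠ 0` then `V_u D_u V_u⁻¹ = M_z`, the bilateral shift on `L²`,
where `V_u = P⁻ + (conj u / conj u(0)) P⁺` with inverse `V_u⁻¹ = P⁻ + u conj(u(0)) P⁺`;
consequently any two duals `D_u`, `D_v` with `u(0) ≠ 0 ≠ v(0)` are similar. -/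
theorem Vu_similarity (U : InnerData) (h0 : U.a0 ≠ 0) :
    (∀ f : L2, f ∈ U.KP → U.Vinv (U.V f) = f) ∧
    (∀ g : L2, U.V (U.Vinv g) = g ∧ U.Vinv g ∈ U.KP) ∧
    (∀ f : U.KP, U.V (U.Du f : L2) = Mz (U.V (f : L2))) ∧
    (∀ V' : InnerData, V'.a0 ≠ 0 →
      ∃ W : U.KP ≃L[ℂ] V'.KP, ∀ f : U.KP, W (U.Du f) = V'.Du (W f)) := by
  refine ⟨fun f hf => U.Vinv_V h0 hf, fun g => ⟨U.V_Vinv h0 g, U.Vinv_mem_KP g⟩, U.VEquiv_Du h0,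
    fun V' hV' => ⟨(U.VEquiv h0).trans (V'.VEquiv hV').symm, fun f => ?_⟩⟩
  rw [ContinuousLinearEquiv.trans_apply, ContinuousLinearEquiv.trans_apply, U.VEquiv_Du h0,
    V'.Du_VEquiv_symm hV']

end Paper
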